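/- arXiv:2101.12223 — 5 statements merged into one kernel-verified Lean document; each statement's English description precedes it below -/
import Mathlib

section
/- For the function ξ(φ) = (√(1 - sin φ) + √(1 - cos φ))² on [0, π/2], for all φ ∈ [0, π/2] we have ξ(φ) ≤ ξ(π/4) = (2√(1 - 1/√2))². -/
/-- The stabilizer extent of the single-qubit magic state `|T_φ†⟩`. -/
noncomputable def xiExtent (φ : ℝ) : ℝ :=
  (Real.sqrt (1 - Real.sin φ) + Real.sqrt (1 - Real.cos φ)) ^ 2

lemma xi_key (s c : ℝ) (hs : 0 ≤ s) (hc : 0 ≤ c) (h : s ^ 2 + c ^ 2 = 1) :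
    (Real.sqrt (1 - s) + Real.sqrt (1 - c)) ^ 2
      = 2 - Real.sqrt 2 + (Real.sqrt 2 - 1) * (s + c) := by
  have hs1 : s ≤ 1 := by nlinarith [sq_nonneg c, sq_nonneg s]
  have hc1 : c ≤ 1 := by nlinarith [sq_nonneg c, sq_nonneg s]
  have hsc1 : 1 ≤ s + c := by nlinarith [sq_nonneg (s + c - 1)]
  have h2 : (0:ℝ) ≤ 2 := by norm_num
  have hsqrt2 : Real.sqrt 2 ^ 2 = 2 := Real.sq_sqrt h2
  have hsqrt2pos : 0 < Real.sqrt 2 := Real.sqrt_pos.mpr (by norm_num)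
  have hprod : Real.sqrt (1 - s) * Real.sqrt (1 - c)
      = (s + c - 1) / Real.sqrt 2 := by
    rw [← Real.sqrt_mul (by linarith)]
    have : (1 - s) * (1 - c) = ((s + c - 1) / Real.sqrt 2) ^ 2 := by
      rw [div_pow, hsqrt2]
      nlinarith
    rw [this, Real.sqrt_sq (div_nonneg (by linarith) hsqrt2pos.le)]
  have e1 : Real.sqrt (1 - s) ^ 2 = 1 - s := Real.sq_sqrt (by linarith)
  have e2 : Real.sqrt (1 - c) ^ 2 = 1 - c := Real.sq_sqrt (by linarith)
  have expand : (Real.sqrt (1 - s) + Real.sqrt (1 - c)) ^ 2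
      = (1 - s) + (1 - c) + 2 * ((s + c - 1) / Real.sqrt 2) := by
    rw [add_sq, e1, e2, mul_assoc, hprod]; ring
  rw [expand]
  field_simp
  nlinarith [hsqrt2]

/-- ξ(φ) = (√(1-sinφ)+√(1-cosφ))² on [0,π/2] is maximized at φ = π/4,
where its value is (2√(1-1/√2))². -/
theorem xiExtent_le_pi_div_four (φ : ℝ) (hφ : φ ∈ Set.Icc 0 (Real.pi / 2)) :
    xiExtent φ ≤ xiExtent (Real.pi / 4) ∧
      xiExtent (Real.pi / 4) = (2 * Real.sqrt (1 - 1 / Real.sqrt 2)) ^ 2 := by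
  obtain ⟨h0, h1⟩ := hφ
  have hs : 0 ≤ Real.sin φ := Real.sin_nonneg_of_nonneg_of_le_pi h0
    (le_trans h1 (by linarith [Real.pi_pos]))
  have hc : 0 ≤ Real.cos φ := Real.cos_nonneg_of_mem_Icc
    ⟨by linarith [Real.pi_pos], h1⟩
  have hsc : Real.sin φ ^ 2 + Real.cos φ ^ 2 = 1 := Real.sin_sq_add_cos_sq φ
  have hsum : Real.sin φ + Real.cos φ ≤ Real.sqrt 2 := by
    have h2 : Real.sqrt 2 ^ 2 = 2 := Real.sq_sqrt (by norm_num)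
    nlinarith [sq_nonneg (Real.sin φ - Real.cos φ), Real.sqrt_nonneg 2]
  have hsin4 : Real.sin (Real.pi / 4) = Real.sqrt 2 / 2 := Real.sin_pi_div_four
  have hcos4 : Real.cos (Real.pi / 4) = Real.sqrt 2 / 2 := Real.cos_pi_div_four
  have hsqrt2pos : 0 < Real.sqrt 2 := Real.sqrt_pos.mpr (by norm_num)
  have h2 : Real.sqrt 2 ^ 2 = 2 := Real.sq_sqrt (by norm_num)
  have hval : xiExtent (Real.pi / 4)
      = 2 - Real.sqrt 2 + (Real.sqrt 2 - 1) * (Real.sqrt 2 / 2 + Real.sqrt 2 / 2) := by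
    unfold xiExtent
    rw [hsin4, hcos4]
    exact xi_key _ _ (by positivity) (by positivity) (by nlinarith)
  constructor
  · have hφval : xiExtent φ
        = 2 - Real.sqrt 2 + (Real.sqrt 2 - 1) * (Real.sin φ + Real.cos φ) :=
      xi_key _ _ hs hc hsc
    rw [hφval, hval]
    have h21 : 1 ≤ Real.sqrt 2 := by nlinarith
    nlinarith
  · have hle : 1 / Real.sqrt 2 ≤ 1 := by
      rw [div_le_one hsqrt2pos]; nlinarith
    rw [hval, mul_pow, Real.sq_sqrt (by linarith)]
    field_simp
    nlinarith
end

section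
/- Let X₀ = 0, X₁, X₂, … be a very-weak martingale taking values in ℝ^N with ‖X_j - X_{j-1}‖₂ ≤ 1 for every j. Then for every a > 0 and every s ∈ ℕ, Pr(‖X_s‖₂ ≥ a) ≤ 2·e^{1 - (a-1)²/(2s)}. -/
/-!
Hayes' argument. For `‖d‖ ≤ 1`, writing `‖v + d‖²` below a convex combination of
`(‖v‖ + 1)²` and `(‖v‖ - 1)²` and using convexity of `z ↦ cosh (l √z)` gives
`cosh (l ‖v + d‖) ≤ cosh (l ‖v‖) cosh l + ⟪c v, d⟫` with `c v` depending on `v` only.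
The martingale property kills the expectation of the inner product, so
`E cosh (l ‖X_s‖) ≤ cosh l ^ s ≤ exp (s l² / 2)`, and Markov's inequality with `l = a / s`
gives `Pr (‖X_s‖ ≥ a) ≤ 2 exp (-a² / (2 s))`, which is stronger than the claim.
-/

open MeasureTheory Real Set
open scoped Nat InnerProductSpace

theorem cosh_mul_abs (l u : ℝ) : cosh (l * |u|) = cosh (l * u) := by
  rw [← cosh_abs, abs_mul, abs_abs, ← abs_mul, cosh_abs]

theorem cosh_mul_le_cosh_mul (l : ℝ) {x y : ℝ} (hx : 0 ≤ x) (hxy : x ≤ y) :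
    cosh (l * x) ≤ cosh (l * y) := by
  rw [cosh_le_cosh, abs_mul, abs_mul, abs_of_nonneg hx, abs_of_nonneg (hx.trans hxy)]
  exact mul_le_mul_of_nonneg_left hxy (abs_nonneg l)

theorem hasSum_cosh_mul_sqrt (l : ℝ) {z : ℝ} (hz : 0 ≤ z) :
    HasSum (fun n : ℕ => (l ^ 2) ^ n * z ^ n / (2 * n)!) (cosh (l * √z)) := by
  convert hasSum_cosh (l * √z) using 2 with n
  rw [pow_mul, mul_pow, sq_sqrt hz, mul_pow]

theorem convexOn_cosh_mul_sqrt (l : ℝ) : ConvexOn ℝ (Ici 0) fun z => cosh (l * √z) := by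
  refine ⟨convex_Ici 0, fun x hx y hy a b ha hb hab => ?_⟩
  simp only [smul_eq_mul]
  have hxy : 0 ≤ a * x + b * y := add_nonneg (mul_nonneg ha hx) (mul_nonneg hb hy)
  refine hasSum_le (fun n => ?_) (hasSum_cosh_mul_sqrt l hxy)
    (((hasSum_cosh_mul_sqrt l hx).mul_left a).add ((hasSum_cosh_mul_sqrt l hy).mul_left b))
  have hpow : (a * x + b * y) ^ n ≤ a * x ^ n + b * y ^ n :=
    (convexOn_pow n).2 hx hy ha hb hab
  calc (l ^ 2) ^ n * (a * x + b * y) ^ n / (2 * n)!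
      ≤ (l ^ 2) ^ n * (a * x ^ n + b * y ^ n) / (2 * n)! := by gcongr
    _ = _ := by ring

theorem cosh_mul_le_of_sq_le {l x y t : ℝ} (ht : |t| ≤ 1)
    (hy : y ^ 2 ≤ x ^ 2 + 2 * x * t + 1) :
    cosh (l * y) ≤ cosh (l * x) * cosh l + t * (sinh (l * x) * sinh l) := by
  obtain ⟨ht₁, ht₂⟩ := abs_le.mp ht
  have hcomb : (1 + t) / 2 * (x + 1) ^ 2 + (1 - (1 + t) / 2) * (x - 1) ^ 2
      = x ^ 2 + 2 * x * t + 1 := by ring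
  calc cosh (l * y) = cosh (l * |y|) := (cosh_mul_abs l y).symm
    _ ≤ cosh (l * √((1 + t) / 2 * (x + 1) ^ 2 + (1 - (1 + t) / 2) * (x - 1) ^ 2)) :=
        cosh_mul_le_cosh_mul l (abs_nonneg y) (abs_le_sqrt (hcomb ▸ hy))
    _ ≤ (1 + t) / 2 * cosh (l * √((x + 1) ^ 2))
          + (1 - (1 + t) / 2) * cosh (l * √((x - 1) ^ 2)) :=
        (convexOn_cosh_mul_sqrt l).2 (mem_Ici.mpr (sq_nonneg _)) (mem_Ici.mpr (sq_nonneg _))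
          (by linarith) (by linarith) (by ring)
    _ = cosh (l * x) * cosh l + t * (sinh (l * x) * sinh l) := by
        rw [sqrt_sq_eq_abs, sqrt_sq_eq_abs, cosh_mul_abs, cosh_mul_abs, mul_add, mul_sub, mul_one,
          cosh_add, cosh_sub]
        ring

section InnerProductSpace

variable {E : Type*} [NormedAddCommGroup E] [InnerProductSpace ℝ E]

/-- The vector `(sinh l / l) ∇ (cosh (l ‖·‖)) v`; its value `0` at `v = 0` is the limit. -/
noncomputable def sinhDir (l : ℝ) (v : E) : E := (sinh l * sinh (l * ‖v‖) / ‖v‖) • v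

theorem norm_sinhDir {l : ℝ} (hl : 0 ≤ l) (v : E) :
    ‖sinhDir l v‖ = sinh l * sinh (l * ‖v‖) := by
  rcases eq_or_ne v 0 with rfl | hv
  · simp [sinhDir]
  · have hsinh : 0 ≤ sinh l * sinh (l * ‖v‖) :=
      mul_nonneg (sinh_nonneg_iff.mpr hl) (sinh_nonneg_iff.mpr (by positivity))
    rw [sinhDir, norm_smul, Real.norm_eq_abs, abs_of_nonneg (by positivity),
      div_mul_cancel₀ _ (norm_ne_zero_iff.mpr hv)]

theorem cosh_mul_norm_add_le (l : ℝ) (v : E) {d : E} (hd : ‖d‖ ≤ 1) :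
    cosh (l * ‖v + d‖) ≤ cosh (l * ‖v‖) * cosh l + ⟪sinhDir l v, d⟫_ℝ := by
  have hcs : |⟪v, d⟫_ℝ| ≤ ‖v‖ :=
    (abs_real_inner_le_norm v d).trans (mul_le_of_le_one_right (norm_nonneg v) hd)
  have hmul : ‖v‖ * (⟪v, d⟫_ℝ / ‖v‖) = ⟪v, d⟫_ℝ := by
    rcases eq_or_ne v 0 with rfl | hv
    · simp
    · exact mul_div_cancel₀ _ (norm_ne_zero_iff.mpr hv)
  have ht : |⟪v, d⟫_ℝ / ‖v‖| ≤ 1 := by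
    rw [abs_div, abs_norm]; exact div_le_one_of_le₀ hcs (norm_nonneg v)
  have hsq : ‖v + d‖ ^ 2 ≤ ‖v‖ ^ 2 + 2 * ‖v‖ * (⟪v, d⟫_ℝ / ‖v‖) + 1 := by
    rw [norm_add_sq_real, mul_assoc, hmul]
    nlinarith [norm_nonneg d]
  convert cosh_mul_le_of_sq_le ht hsq using 2
  rw [sinhDir, real_inner_smul_left]
  ring

theorem stronglyMeasurable_sinhDir [MeasurableSpace E] [BorelSpace E]
    [SecondCountableTopology E] (l : ℝ) : StronglyMeasurable (sinhDir (E := E) l) := by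
  unfold sinhDir
  fun_prop

end InnerProductSpace

theorem integrable_cosh_mul_norm {Ω E : Type*} {mΩ : MeasurableSpace Ω} {μ : Measure Ω}
    [IsFiniteMeasure μ] [NormedAddCommGroup E] {Y : Ω → E} (hY : AEStronglyMeasurable Y μ)
    (l : ℝ) {B : ℝ} (hB : ∀ ω, ‖Y ω‖ ≤ B) : Integrable (fun ω => cosh (l * ‖Y ω‖)) μ := by
  refine .of_bound (by fun_prop) (cosh (l * B)) (ae_of_all _ fun ω => ?_)
  rw [Real.norm_eq_abs, abs_of_pos (cosh_pos _)]
  exact cosh_mul_le_cosh_mul l (norm_nonneg _) (hB ω)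

theorem norm_le_of_norm_sub_succ_le_one {E : Type*} [SeminormedAddCommGroup E] {x : ℕ → E}
    (h0 : x 0 = 0) (hinc : ∀ j, ‖x (j + 1) - x j‖ ≤ 1) (j : ℕ) : ‖x j‖ ≤ j := by
  induction j with
  | zero => simp [h0]
  | succ n ih =>
    calc ‖x (n + 1)‖ ≤ ‖x (n + 1) - x n‖ + ‖x n‖ := norm_le_norm_sub_add _ _
      _ ≤ 1 + n := add_le_add (hinc n) ih
      _ = (n + 1 : ℕ) := by push_cast; ring

section Martingale

variable {Ω E : Type*} {mΩ : MeasurableSpace Ω} {μ : Measure Ω}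
  [NormedAddCommGroup E] [InnerProductSpace ℝ E] [CompleteSpace E] [MeasurableSpace E]

/-- When `σ(Y)` is not a sub-σ-algebra of `mΩ`, `μ[Z | σ(Y)]` is `0` by convention, so then
`Y = 0` a.e.; this is why `g 0 = 0` is needed. -/
theorem integral_inner_sub_eq_zero_of_condExp_comap_eq [IsFiniteMeasure μ] {Y Z : Ω → E}
    {g : E → E} (hg : StronglyMeasurable g) (hg0 : g 0 = 0) {C : ℝ}
    (hgY : ∀ ω, ‖g (Y ω)‖ ≤ C) (hZ : Integrable Z μ)
    (hcond : μ[Z | MeasurableSpace.comap Y ‹_›] =ᵐ[μ] Y) :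
    ∫ ω, ⟪g (Y ω), Z ω - Y ω⟫_ℝ ∂μ = 0 := by
  set m := MeasurableSpace.comap Y ‹MeasurableSpace E›
  by_cases hm : m ≤ mΩ
  · have hY : Integrable Y μ := integrable_condExp.congr hcond
    have hgYm : StronglyMeasurable[m] fun ω => g (Y ω) :=
      hg.comp_measurable (comap_measurable Y)
    have hinner : ∀ {W : Ω → E}, Integrable W μ → Integrable (fun ω => ⟪g (Y ω), W ω⟫_ℝ) μ :=
      fun hW => (innerSL ℝ).integrable_of_bilin_of_bdd_left C
        (hgYm.mono hm).aestronglyMeasurable (ae_of_all _ hgY) hW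
    simp_rw [inner_sub_right]
    rw [integral_sub (hinner hZ) (hinner hY), sub_eq_zero]
    calc ∫ ω, ⟪g (Y ω), Z ω⟫_ℝ ∂μ = ∫ ω, (μ[fun ω => ⟪g (Y ω), Z ω⟫_ℝ | m]) ω ∂μ :=
          (integral_condExp hm).symm
      _ = ∫ ω, ⟪g (Y ω), (μ[Z | m]) ω⟫_ℝ ∂μ :=
          integral_congr_ae (condExp_bilin_of_stronglyMeasurable_left (innerSL ℝ) hgYm
            (hinner hZ) hZ)
      _ = ∫ ω, ⟪g (Y ω), Y ω⟫_ℝ ∂μ := integral_congr_ae (hcond.mono fun ω h => by simp [h])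
  · have hY0 : Y =ᵐ[μ] 0 := by
      rw [condExp_of_not_le hm] at hcond
      exact hcond.symm
    rw [integral_eq_zero_of_ae]
    filter_upwards [hY0] with ω hω
    simp [hω, hg0]

theorem integral_cosh_norm_le_of_condExp_comap_eq [BorelSpace E] [SecondCountableTopology E]
    [IsFiniteMeasure μ] {Y Z : Ω → E} {l B : ℝ} (hl : 0 ≤ l) (hB : ∀ ω, ‖Y ω‖ ≤ B)
    (hZ : Integrable Z μ)
    (hcond : μ[Z | MeasurableSpace.comap Y ‹_›] =ᵐ[μ] Y) (hinc : ∀ ω, ‖Z ω - Y ω‖ ≤ 1) :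
    ∫ ω, cosh (l * ‖Z ω‖) ∂μ ≤ cosh l * ∫ ω, cosh (l * ‖Y ω‖) ∂μ := by
  have hY : Integrable Y μ := integrable_condExp.congr hcond
  have hdirB : ∀ ω, ‖sinhDir l (Y ω)‖ ≤ sinh l * sinh (l * B) := fun ω => by
    rw [norm_sinhDir hl]
    exact mul_le_mul_of_nonneg_left (sinh_le_sinh.mpr (mul_le_mul_of_nonneg_left (hB ω) hl))
      (sinh_nonneg_iff.mpr hl)
  have hcoshY := integrable_cosh_mul_norm hY.aestronglyMeasurable l hB
  have hinner : Integrable (fun ω => ⟪sinhDir l (Y ω), Z ω - Y ω⟫_ℝ) μ :=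
    (innerSL ℝ).integrable_of_bilin_of_bdd_left _
      ((stronglyMeasurable_sinhDir l).aestronglyMeasurable.comp_aemeasurable hY.aemeasurable)
      (ae_of_all _ hdirB) (hZ.sub hY)
  have hpoint : ∀ ω, cosh (l * ‖Z ω‖)
      ≤ cosh (l * ‖Y ω‖) * cosh l + ⟪sinhDir l (Y ω), Z ω - Y ω⟫_ℝ := fun ω => by
    simpa using cosh_mul_norm_add_le l (Y ω) (hinc ω)
  calc ∫ ω, cosh (l * ‖Z ω‖) ∂μ
      ≤ ∫ ω, (cosh (l * ‖Y ω‖) * cosh l + ⟪sinhDir l (Y ω), Z ω - Y ω⟫_ℝ) ∂μ :=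
        integral_mono_of_nonneg (ae_of_all _ fun ω => (cosh_pos _).le)
          ((hcoshY.mul_const _).add hinner) (ae_of_all _ hpoint)
    _ = cosh l * ∫ ω, cosh (l * ‖Y ω‖) ∂μ := by
        rw [integral_add (hcoshY.mul_const _) hinner,
          integral_inner_sub_eq_zero_of_condExp_comap_eq (stronglyMeasurable_sinhDir l)
            (by simp [sinhDir]) hdirB hZ hcond, integral_mul_const]
        ring

theorem integral_cosh_norm_le_cosh_pow [BorelSpace E] [SecondCountableTopology E]
    [IsProbabilityMeasure μ] {X : ℕ → Ω → E} (h0 : X 0 = 0) (hint : ∀ j, Integrable (X j) μ)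
    (hmart : ∀ j, μ[X (j + 1) | MeasurableSpace.comap (X j) ‹_›] =ᵐ[μ] X j)
    (hinc : ∀ j ω, ‖X (j + 1) ω - X j ω‖ ≤ 1) {l : ℝ} (hl : 0 ≤ l) (s : ℕ) :
    ∫ ω, cosh (l * ‖X s ω‖) ∂μ ≤ cosh l ^ s := by
  induction s with
  | zero => simp [h0]
  | succ n ih =>
    calc ∫ ω, cosh (l * ‖X (n + 1) ω‖) ∂μ ≤ cosh l * ∫ ω, cosh (l * ‖X n ω‖) ∂μ :=
          integral_cosh_norm_le_of_condExp_comap_eq hl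
            (fun ω => norm_le_of_norm_sub_succ_le_one (x := (X · ω)) (congrFun h0 ω)
              (hinc · ω) n)
            (hint (n + 1)) (hmart n) (hinc n)
      _ ≤ cosh l ^ (n + 1) := by
          rw [pow_succ']
          gcongr

end Martingale

theorem measure_norm_ge_le_integral_cosh_div {Ω E : Type*} {mΩ : MeasurableSpace Ω}
    {μ : Measure Ω} [IsFiniteMeasure μ] [NormedAddCommGroup E] {f : Ω → E} (l : ℝ) {a : ℝ}
    (ha : 0 ≤ a) (hf : Integrable (fun ω => cosh (l * ‖f ω‖)) μ) :
    μ {ω | a ≤ ‖f ω‖} ≤ ENNReal.ofReal ((∫ ω, cosh (l * ‖f ω‖) ∂μ) / cosh (l * a)) := by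
  have hmarkov := mul_meas_ge_le_integral_of_nonneg
    (ae_of_all μ fun ω => (cosh_pos (l * ‖f ω‖)).le) hf (cosh (l * a))
  calc μ {ω | a ≤ ‖f ω‖} ≤ μ {ω | cosh (l * a) ≤ cosh (l * ‖f ω‖)} :=
        measure_mono fun ω hω => cosh_mul_le_cosh_mul l ha hω
    _ = ENNReal.ofReal (μ.real {ω | cosh (l * a) ≤ cosh (l * ‖f ω‖)}) :=
        (ENNReal.ofReal_toReal (measure_ne_top μ _)).symm
    _ ≤ ENNReal.ofReal ((∫ ω, cosh (l * ‖f ω‖) ∂μ) / cosh (l * a)) := by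
        gcongr
        rwa [le_div_iff₀ (cosh_pos _), mul_comm]

theorem cosh_div_pow_div_cosh_le (a : ℝ) (s : ℕ) :
    cosh (a / s) ^ s / cosh (a / s * a) ≤ 2 * exp (-(a ^ 2 / (2 * s))) := by
  have hexp : s * ((a / s) ^ 2 / 2) - a / s * a = -(a ^ 2 / (2 * s)) := by
    rcases eq_or_ne (s : ℝ) 0 with hs | hs
    · simp [hs]
    · field_simp
      ring
  have hcosh : exp (a / s * a) / 2 ≤ cosh (a / s * a) := by
    rw [cosh_eq]
    linarith [exp_pos (-(a / s * a))]
  calc cosh (a / s) ^ s / cosh (a / s * a)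
      ≤ exp ((a / s) ^ 2 / 2) ^ s / (exp (a / s * a) / 2) :=
        div_le_div₀ (by positivity) (pow_le_pow_left₀ (cosh_pos _).le (cosh_le_exp_half_sq _) s)
          (by positivity) hcosh
    _ = 2 * exp (s * ((a / s) ^ 2 / 2) - a / s * a) := by
        rw [← exp_nat_mul, exp_sub]
        field_simp
    _ = 2 * exp (-(a ^ 2 / (2 * s))) := by rw [hexp]

theorem neg_sq_div_le_one_sub_sub_one_sq_div {a : ℝ} (ha : 0 ≤ a) (s : ℕ) :
    -(a ^ 2 / (2 * s)) ≤ 1 - (a - 1) ^ 2 / (2 * s) := by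
  rcases Nat.eq_zero_or_pos s with rfl | hs
  · simp
  · rw [neg_le_sub_iff_le_add, ← sub_le_iff_le_add, ← sub_div, div_le_one (by positivity)]
    have : (1 : ℝ) ≤ s := by exact_mod_cast hs
    nlinarith

/-- Vector-martingale concentration (Hayes). If X₀ = 0, X₁, X₂, … is a
very-weak martingale in ℝ^N (each X_j integrable, E[X_j | X_{j-1}] = X_{j-1}) with
increments ‖X_j - X_{j-1}‖ ≤ 1, then for every a > 0 and s ∈ ℕ,
Pr(‖X_s‖ ≥ a) ≤ 2 e^{1 - (a-1)²/(2s)}. -/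
theorem very_weak_martingale_concentration {N : ℕ} {Ω : Type*} [MeasurableSpace Ω]
    (μ : Measure Ω) [IsProbabilityMeasure μ]
    (X : ℕ → Ω → EuclideanSpace ℝ (Fin N))
    (h0 : X 0 = 0)
    (hint : ∀ j, Integrable (X j) μ)
    (hmart : ∀ j : ℕ, 1 ≤ j →
      μ[X j | MeasurableSpace.comap (X (j - 1)) (borel (EuclideanSpace ℝ (Fin N)))]
        =ᵐ[μ] X (j - 1))
    (hinc : ∀ j : ℕ, 1 ≤ j → ∀ ω, ‖X j ω - X (j - 1) ω‖ ≤ 1) :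
    ∀ a : ℝ, 0 < a → ∀ s : ℕ,
      μ {ω | a ≤ ‖X s ω‖} ≤
        ENNReal.ofReal (2 * Real.exp (1 - (a - 1) ^ 2 / (2 * s))) := by
  intro a ha s
  have hmart' : ∀ j, μ[X (j + 1) | MeasurableSpace.comap (X j) inferInstance] =ᵐ[μ] X j :=
    fun j => by simpa [← BorelSpace.measurable_eq] using hmart (j + 1) (by omega)
  have hinc' : ∀ j ω, ‖X (j + 1) ω - X j ω‖ ≤ 1 := fun j => hinc (j + 1) (by omega)
  have hbound : ∀ ω, ‖X s ω‖ ≤ s := fun ω =>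
    norm_le_of_norm_sub_succ_le_one (x := (X · ω)) (congrFun h0 ω) (hinc' · ω) s
  calc μ {ω | a ≤ ‖X s ω‖}
      ≤ ENNReal.ofReal ((∫ ω, cosh (a / s * ‖X s ω‖) ∂μ) / cosh (a / s * a)) :=
        measure_norm_ge_le_integral_cosh_div _ ha.le
          (integrable_cosh_mul_norm (hint s).aestronglyMeasurable _ hbound)
    _ ≤ ENNReal.ofReal (cosh (a / s) ^ s / cosh (a / s * a)) := by
        gcongr
        exact integral_cosh_norm_le_cosh_pow h0 hint hmart' hinc' (by positivity) s
    _ ≤ ENNReal.ofReal (2 * exp (-(a ^ 2 / (2 * s)))) := by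
        gcongr
        exact cosh_div_pow_div_cosh_le a s
    _ ≤ ENNReal.ofReal (2 * exp (1 - (a - 1) ^ 2 / (2 * s))) := by
        gcongr
        exact neg_sq_div_le_one_sub_sub_one_sq_div ha.le s
end

section
/- Let q be a probability distribution on a finite index set [N], and let {|ψ_j⟩}_{j∈[N]} be vectors in ℂ^d with ‖|ψ_j⟩‖² ≤ m for all j. Let |μ⟩ = Σ_j q_j |ψ_j⟩ and p = ‖|μ⟩‖². If x₁, …, x_s are sampled i.i.d. from q and |ψ̄⟩ = (1/s) Σ_{j=1}^s |ψ_{x_j}⟩, then for all ε > 0, Pr(‖ |ψ̄⟩⟨ψ̄| - |μ⟩⟨μ| ‖₁ ≥ ε) ≤ 2e² · exp( -s(√(p+ε) - √p)² / (2(√m + √p)²) ), where ‖·‖₁ is the Schatten 1-norm. -/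
open MeasureTheory

/-- The Schatten 1-norm (trace norm) of a complex square matrix:
the sum of its singular values, i.e. of the square roots of the eigenvalues of `Aᴴ * A`. -/
noncomputable def schattenOneNorm {d : ℕ} (A : Matrix (Fin d) (Fin d) ℂ) : ℝ :=
  ∑ i, Real.sqrt ((Matrix.isHermitian_conjTranspose_mul_self A).eigenvalues i)

/-- The rank-one operator |v⟩⟨v| associated with a vector v. -/
noncomputable def rankOne {d : ℕ} (v : EuclideanSpace ℂ (Fin d)) : Matrix (Fin d) (Fin d) ℂ :=
  fun i j => v i * (starRingEnd ℂ) (v j)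

/-!
The Gram matrix `ΔᴴΔ` of `Δ = |a⟩⟨a| - |b⟩⟨b|` is positive semidefinite of rank at most two, so
its two possibly nonzero eigenvalues are determined by `tr ΔᴴΔ` and `tr (ΔᴴΔ)²`, which are
polynomials in `‖a‖`, `‖b‖` and `|⟪a, b⟫|`. This gives the closed form
`‖Δ‖₁ = √((‖a‖² + ‖b‖²)² - 4 |⟪a, b⟫|²) ≤ ‖a - b‖ (‖a‖ + ‖b‖)`.
Hence `‖Δ‖₁ ≥ ε` with `a = ψ̄`, `b = μ` forces `‖ψ̄ - μ‖ ≥ √(p + ε) - √p`, and the vector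
concentration bound applies at that threshold.
-/

open Matrix Finset ComplexConjugate
open scoped InnerProductSpace ComplexOrder

theorem Real.sum_sqrt_eq_of_card_ne_zero_le_two {ι : Type*} [Fintype ι]
    (ν : ι → ℝ) (hν : ∀ i, 0 ≤ ν i) (hcard : #{i | ν i ≠ 0} ≤ 2) :
    ∑ i, √(ν i) = √(∑ i, ν i + √(2 * ((∑ i, ν i) ^ 2 - ∑ i, ν i ^ 2))) := by
  classical
  set S : Finset ι := {i | ν i ≠ 0}
  have hS (f : ℝ → ℝ) (hf : f 0 = 0) : ∑ i, f (ν i) = ∑ i ∈ S, f (ν i) :=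
    (sum_filter_of_ne (p := (ν · ≠ 0)) fun i _ hfi hνi => hfi (by rw [hνi, hf])).symm
  rw [hS _ Real.sqrt_zero, hS (fun t => t) rfl, hS (· ^ 2) (zero_pow two_ne_zero)]
  interval_cases h : S.card
  · simp [card_eq_zero.mp h]
  · obtain ⟨i, hi⟩ := card_eq_one.mp h
    simp [hi]
  · obtain ⟨i, j, hij, hi⟩ := card_eq_two.mp h
    simp only [hi, sum_pair hij]
    have hsq : 2 * ((ν i + ν j) ^ 2 - (ν i ^ 2 + ν j ^ 2)) = (2 * √(ν i) * √(ν j)) ^ 2 := by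
      rw [mul_pow, mul_pow, Real.sq_sqrt (hν i), Real.sq_sqrt (hν j)]; ring
    rw [hsq, Real.sqrt_sq (by positivity), ← Real.sqrt_sq (by positivity : 0 ≤ √(ν i) + √(ν j))]
    congr 1
    rw [add_sq, Real.sq_sqrt (hν i), Real.sq_sqrt (hν j)]; ring

section Eigenvalues

variable {n 𝕜 : Type*} [Fintype n] [DecidableEq n] [RCLike 𝕜] {A : Matrix n n 𝕜}

theorem Matrix.IsHermitian.trace_mul_self_eq_sum_eigenvalues_sq (hA : A.IsHermitian) :
    (A * A).trace = ∑ i, (hA.eigenvalues i : 𝕜) ^ 2 := by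
  conv_lhs => rw [hA.spectral_theorem, ← map_mul, Unitary.conjStarAlgAut_apply, trace_mul_cycle,
    Unitary.coe_star_mul_self, one_mul, diagonal_mul_diagonal, trace_diagonal]
  simp [sq]

theorem Matrix.PosSemidef.sum_sqrt_eigenvalues_eq_of_rank_le_two (hA : A.PosSemidef)
    (hrank : A.rank ≤ 2) :
    ∑ i, √(hA.isHermitian.eigenvalues i)
      = √(RCLike.re A.trace
          + √(2 * (RCLike.re A.trace ^ 2 - RCLike.re (A * A).trace))) := by
  have htrace : RCLike.re A.trace = ∑ i, hA.isHermitian.eigenvalues i := by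
    simp [hA.isHermitian.trace_eq_sum_eigenvalues]
  have htrace_sq : RCLike.re (A * A).trace = ∑ i, hA.isHermitian.eigenvalues i ^ 2 := by
    simp only [hA.isHermitian.trace_mul_self_eq_sum_eigenvalues_sq, ← RCLike.ofReal_pow, map_sum,
      RCLike.ofReal_re]
  rw [htrace, htrace_sq]
  refine Real.sum_sqrt_eq_of_card_ne_zero_le_two _ hA.eigenvalues_nonneg ?_
  rwa [← Fintype.card_subtype, ← hA.isHermitian.rank_eq_card_non_zero_eigs]

end Eigenvalues

section RankOne

variable {d : ℕ} (a b : EuclideanSpace ℂ (Fin d))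

lemma rankOne_eq_vecMulVec : rankOne a = vecMulVec a (star a) := rfl

lemma isHermitian_rankOne : (rankOne a).IsHermitian := by
  simp [IsHermitian, rankOne_eq_vecMulVec, conjTranspose_vecMulVec]

lemma rank_rankOne_sub_le : (rankOne a - rankOne b).rank ≤ 2 := by
  have hfac : rankOne a - rankOne b
      = (of fun i k => ![a i, b i] k) * (of fun k j => ![conj (a j), -conj (b j)] k) := by
    ext i j
    simp [rankOne, mul_apply, Fin.sum_univ_two, sub_eq_add_neg]
  rw [hfac]
  exact (rank_mul_le_left _ _).trans (rank_le_width _)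

lemma trace_conjTranspose_mul_self_rankOne_sub :
    ((rankOne a - rankOne b)ᴴ * (rankOne a - rankOne b)).trace
      = ((‖a‖ ^ 4 + ‖b‖ ^ 4 - 2 * ‖⟪a, b⟫_ℂ‖ ^ 2 : ℝ) : ℂ) := by
  rw [((isHermitian_rankOne a).sub (isHermitian_rankOne b)).eq]
  simp only [rankOne_eq_vecMulVec, sub_mul, mul_sub, vecMulVec_mul_vecMulVec, trace_sub,
    trace_vecMulVec, dotProduct_smul, smul_eq_mul, dotProduct_comm (star _),
    ← EuclideanSpace.inner_eq_star_dotProduct, inner_self_eq_norm_sq_to_K]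
  rw [norm_inner_symm, ← inner_conj_symm a b]
  push_cast
  linear_combination (-2) * RCLike.mul_conj ⟪b, a⟫_ℂ

lemma trace_sq_conjTranspose_mul_self_rankOne_sub :
    ((rankOne a - rankOne b)ᴴ * (rankOne a - rankOne b)
      * ((rankOne a - rankOne b)ᴴ * (rankOne a - rankOne b))).trace
      = ((‖a‖ ^ 8 + ‖b‖ ^ 8 + 2 * ‖⟪a, b⟫_ℂ‖ ^ 4 + 4 * ‖a‖ ^ 2 * ‖b‖ ^ 2 * ‖⟪a, b⟫_ℂ‖ ^ 2
          - 4 * ‖a‖ ^ 4 * ‖⟪a, b⟫_ℂ‖ ^ 2 - 4 * ‖b‖ ^ 4 * ‖⟪a, b⟫_ℂ‖ ^ 2 : ℝ) : ℂ) := by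
  rw [((isHermitian_rankOne a).sub (isHermitian_rankOne b)).eq]
  simp only [rankOne_eq_vecMulVec, sub_mul, mul_sub, vecMulVec_mul_vecMulVec, Matrix.smul_mul,
    Matrix.mul_smul, trace_sub, trace_smul, vecMulVec_smul, trace_vecMulVec, smul_eq_mul,
    dotProduct_comm (star _), ← EuclideanSpace.inner_eq_star_dotProduct,
    inner_self_eq_norm_sq_to_K]
  rw [norm_inner_symm, ← inner_conj_symm a b]
  push_cast
  linear_combination (2 * (⟪b, a⟫_ℂ * conj ⟪b, a⟫_ℂ + (‖⟪b, a⟫_ℂ‖ : ℂ) ^ 2)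
    + 4 * (‖a‖ : ℂ) ^ 2 * (‖b‖ : ℂ) ^ 2 - 4 * (‖a‖ : ℂ) ^ 4 - 4 * (‖b‖ : ℂ) ^ 4)
    * RCLike.mul_conj ⟪b, a⟫_ℂ

theorem schattenOneNorm_rankOne_sub :
    schattenOneNorm (rankOne a - rankOne b)
      = √((‖a‖ ^ 2 + ‖b‖ ^ 2) ^ 2 - 4 * ‖⟪a, b⟫_ℂ‖ ^ 2) := by
  have hrank : ((rankOne a - rankOne b)ᴴ * (rankOne a - rankOne b)).rank ≤ 2 := by
    rw [rank_conjTranspose_mul_self]; exact rank_rankOne_sub_le a b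
  rw [schattenOneNorm,
    (posSemidef_conjTranspose_mul_self _).sum_sqrt_eigenvalues_eq_of_rank_le_two hrank,
    trace_conjTranspose_mul_self_rankOne_sub, trace_sq_conjTranspose_mul_self_rankOne_sub]
  simp only [RCLike.re_to_complex, Complex.ofReal_re]
  have hcs : ‖⟪a, b⟫_ℂ‖ ^ 2 ≤ ‖a‖ ^ 2 * ‖b‖ ^ 2 := by
    rw [← mul_pow]; gcongr; exact norm_inner_le_norm a b
  generalize ‖a‖ = x, ‖b‖ = y, ‖⟪a, b⟫_ℂ‖ = c at hcs ⊢
  have hdisc : 2 * ((x ^ 4 + y ^ 4 - 2 * c ^ 2) ^ 2 - (x ^ 8 + y ^ 8 + 2 * c ^ 4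
      + 4 * x ^ 2 * y ^ 2 * c ^ 2 - 4 * x ^ 4 * c ^ 2 - 4 * y ^ 4 * c ^ 2))
      = (2 * (x ^ 2 * y ^ 2 - c ^ 2)) ^ 2 := by ring
  rw [hdisc, Real.sqrt_sq (by linarith)]
  ring_nf

theorem schattenOneNorm_rankOne_sub_le :
    schattenOneNorm (rankOne a - rankOne b) ≤ ‖a - b‖ * (‖a‖ + ‖b‖) := by
  have hcs : ‖⟪a, b⟫_ℂ‖ ≤ ‖a‖ * ‖b‖ := norm_inner_le_norm a b
  have hdist : ‖a‖ ^ 2 + ‖b‖ ^ 2 - 2 * ‖⟪a, b⟫_ℂ‖ ≤ ‖a - b‖ ^ 2 := by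
    rw [@norm_sub_sq ℂ]; linarith [RCLike.re_le_norm ⟪a, b⟫_ℂ]
  rw [schattenOneNorm_rankOne_sub, Real.sqrt_le_iff]
  refine ⟨by positivity, ?_⟩
  calc (‖a‖ ^ 2 + ‖b‖ ^ 2) ^ 2 - 4 * ‖⟪a, b⟫_ℂ‖ ^ 2
      = (‖a‖ ^ 2 + ‖b‖ ^ 2 - 2 * ‖⟪a, b⟫_ℂ‖) * (‖a‖ ^ 2 + ‖b‖ ^ 2 + 2 * ‖⟪a, b⟫_ℂ‖) := by ring
    _ ≤ ‖a - b‖ ^ 2 * (‖a‖ + ‖b‖) ^ 2 := by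
      gcongr
      nlinarith
    _ = (‖a - b‖ * (‖a‖ + ‖b‖)) ^ 2 := by ring

variable {a b} in
theorem sqrt_norm_sq_add_sub_norm_le_of_le_schattenOneNorm {ε : ℝ}
    (hε : ε ≤ schattenOneNorm (rankOne a - rankOne b)) :
    √(‖b‖ ^ 2 + ε) - ‖b‖ ≤ ‖a - b‖ := by
  have ha : ‖a‖ ≤ ‖a - b‖ + ‖b‖ := norm_le_norm_sub_add a b
  have h := hε.trans (schattenOneNorm_rankOne_sub_le a b)
  rw [sub_le_iff_le_add, Real.sqrt_le_iff]
  refine ⟨by positivity, ?_⟩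
  nlinarith [norm_nonneg (a - b), norm_nonneg b]

end RankOne

theorem sampled_projector_concentration_general {d N s : ℕ}
    (q : PMF (Fin N))
    (m : ℝ)
    (μvec : EuclideanSpace ℂ (Fin d))
    (p : ℝ) (hp : p = ‖μvec‖ ^ 2)
    (ψbar : (Fin s → Fin N) → EuclideanSpace ℂ (Fin d))
    (hconc : ∀ ε : ℝ, 0 < ε →
      (Measure.pi fun _ : Fin s => q.toMeasure) {x | ε ≤ ‖ψbar x - μvec‖} ≤
        ENNReal.ofReal (2 * Real.exp 2 *
          Real.exp (-(s * ε ^ 2) / (2 * (Real.sqrt m + Real.sqrt p) ^ 2)))) :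
    ∀ ε : ℝ, 0 < ε →
      (Measure.pi fun _ : Fin s => q.toMeasure)
          {x | ε ≤ schattenOneNorm (rankOne (ψbar x) - rankOne μvec)} ≤
        ENNReal.ofReal (2 * Real.exp 2 *
          Real.exp (-(s * (Real.sqrt (p + ε) - Real.sqrt p) ^ 2) /
            (2 * (Real.sqrt m + Real.sqrt p) ^ 2))) := by
  intro ε hε
  have hp0 : 0 ≤ p := hp ▸ sq_nonneg _
  have hμ : ‖μvec‖ = √p := by rw [hp, Real.sqrt_sq (norm_nonneg _)]
  refine (measure_mono fun x hx => ?_).trans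
    (hconc _ (sub_pos.2 (Real.sqrt_lt_sqrt hp0 (lt_add_of_pos_right p hε))))
  have h := sqrt_norm_sq_add_sub_norm_le_of_le_schattenOneNorm hx
  rwa [← hp, hμ] at h

/-- Let q be a probability distribution on [N], ψ_j ∈ ℂ^d with ‖ψ_j‖² ≤ m,
|μ⟩ = Σ_j q_j ψ_j and p = ‖μ⟩‖². Sampling x₁,…,x_s i.i.d. from q and setting
|ψ̄⟩ = (1/s) Σ_j ψ_{x_j}, for all ε > 0,
Pr(‖ |ψ̄⟩⟨ψ̄| - |μ⟩⟨μ| ‖₁ ≥ ε) ≤ 2e² exp(-s(√(p+ε)-√p)²/(2(√m+√p)²)).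
(The vector-norm concentration bound is assumed as a hypothesis, as allowed.) -/
theorem sampled_projector_concentration {d N s : ℕ} (hs : 0 < s)
    (q : PMF (Fin N)) (ψ : Fin N → EuclideanSpace ℂ (Fin d))
    (m : ℝ) (hm : ∀ j, ‖ψ j‖ ^ 2 ≤ m)
    (μvec : EuclideanSpace ℂ (Fin d))
    (hμ : μvec = ∑ j, ((q j).toReal : ℂ) • ψ j)
    (p : ℝ) (hp : p = ‖μvec‖ ^ 2)
    (ψbar : (Fin s → Fin N) → EuclideanSpace ℂ (Fin d))
    (hψbar : ∀ x, ψbar x = (s : ℂ)⁻¹ • ∑ j, ψ (x j))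
    (hconc : ∀ ε : ℝ, 0 < ε →
      (Measure.pi fun _ : Fin s => q.toMeasure) {x | ε ≤ ‖ψbar x - μvec‖} ≤
        ENNReal.ofReal (2 * Real.exp 2 *
          Real.exp (-(s * ε ^ 2) / (2 * (Real.sqrt m + Real.sqrt p) ^ 2)))) :
    ∀ ε : ℝ, 0 < ε →
      (Measure.pi fun _ : Fin s => q.toMeasure)
          {x | ε ≤ schattenOneNorm (rankOne (ψbar x) - rankOne μvec)} ≤
        ENNReal.ofReal (2 * Real.exp 2 *
          Real.exp (-(s * (Real.sqrt (p + ε) - Real.sqrt p) ^ 2) /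
            (2 * (Real.sqrt m + Real.sqrt p) ^ 2))) :=
  sampled_projector_concentration_general q m μvec p hp ψbar hconc
end

section
/- Let G = {g_z, g_x, g₁, …, g_k} be a commuting independent set of Pauli operators on n ≥ 2 qubits in ZX(j)-form with leading-Z generator g_z and leading-X generator g_x on qubit j (i.e., g_z acts as Z on qubit j, g_x acts as X on qubit j, and all g_i act as identity on qubit j). For fixed a ∈ {0,1}, define g̃_z = ⟨a| g_z |a⟩ and g̃_i = ⟨a| g_i |a⟩ where the bra-ket contracts qubit j. Then {g̃_z, g̃₁, …, g̃_k} is a commuting independent set of Pauli operators on n-1 qubits. -/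
open scoped Matrix

/-- Pauli X. -/
def pauliX : Matrix (Fin 2) (Fin 2) ℂ := !![0, 1; 1, 0]
/-- Pauli Y. -/
noncomputable def pauliY : Matrix (Fin 2) (Fin 2) ℂ := !![0, -Complex.I; Complex.I, 0]
/-- Pauli Z. -/
def pauliZ : Matrix (Fin 2) (Fin 2) ℂ := !![1, 0; 0, -1]

/-- An n-qubit Pauli operator on (ℂ²)^{⊗n} indexed by `Fin n → Fin 2`. -/
noncomputable def IsPauli {n : ℕ}
    (A : Matrix (Fin n → Fin 2) (Fin n → Fin 2) ℂ) : Prop :=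
  ∃ (ω : ℂ) (P : Fin n → Matrix (Fin 2) (Fin 2) ℂ),
    ω ∈ ({1, -1, Complex.I, -Complex.I} : Set ℂ) ∧
    (∀ j, P j ∈ ({1, pauliX, pauliY, pauliZ} : Set (Matrix (Fin 2) (Fin 2) ℂ))) ∧
    ∀ v w, A v w = ω * ∏ j, P j (v j) (w j)

/-- A Pauli operator on n+1 qubits, with the distinguished qubit j written as the
first tensor factor: ω Q ⊗ P₁ ⊗ … ⊗ P_n. -/
noncomputable def IsPauliProd {n : ℕ}
    (A : Matrix (Fin 2 × (Fin n → Fin 2)) (Fin 2 × (Fin n → Fin 2)) ℂ) : Prop :=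
  ∃ (ω : ℂ) (Q : Matrix (Fin 2) (Fin 2) ℂ) (P : Fin n → Matrix (Fin 2) (Fin 2) ℂ),
    ω ∈ ({1, -1, Complex.I, -Complex.I} : Set ℂ) ∧
    Q ∈ ({1, pauliX, pauliY, pauliZ} : Set (Matrix (Fin 2) (Fin 2) ℂ)) ∧
    (∀ j, P j ∈ ({1, pauliX, pauliY, pauliZ} : Set (Matrix (Fin 2) (Fin 2) ℂ))) ∧
    ∀ p q, A p q = ω * Q p.1 q.1 * ∏ j, P j (p.2 j) (q.2 j)

/-!
Write operators in 2 × 2 block form with respect to qubit `j`. The generators `g_z` and `g_i` are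
block diagonal, and on block-diagonal operators the contraction `⟨a| · |a⟩` is the `a`-th
diagonal block, hence multiplicative; so the contracted operators are Pauli and commute. A
block-diagonal `diag(A₀, A₁)` commutes with `g_x = X ⊗ x` iff `A₀ x = x A₁` and `A₁ x = x A₀`,
and `x` is invertible because `g_x²` is a nonzero scalar, so either block determines the other.
Thus contraction is an injective monoid homomorphism on the block-diagonal commutant of `g_x`,
which contains `g_z` and every `g_i`, and injective homomorphisms preserve independence.
-/

open Matrix
open scoped Kronecker

namespace Matrix

def piKronecker {ι α R : Type*} [Fintype ι] [CommSemiring R] (P : ι → Matrix α α R) :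
    Matrix (ι → α) (ι → α) R :=
  of fun v w => ∏ j, P j (v j) (w j)

theorem piKronecker_mul {ι α R : Type*} [Fintype ι] [DecidableEq ι] [Fintype α]
    [CommSemiring R] (P P' : ι → Matrix α α R) :
    piKronecker P * piKronecker P' = piKronecker (P * P') := by
  ext v w
  simp only [piKronecker, mul_apply, of_apply, Pi.mul_apply, ← Finset.prod_mul_distrib]
  rw [Finset.prod_univ_sum, Fintype.piFinset_univ]

theorem piKronecker_one {ι α R : Type*} [Fintype ι] [DecidableEq α] [CommSemiring R] :
    piKronecker (1 : ι → Matrix α α R) = 1 := by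
  ext v w
  simp only [piKronecker, of_apply, Pi.one_apply, one_apply, Finset.prod_boole, funext_iff,
    Finset.mem_univ, true_implies]

section BlockDiagonalFst

variable (ι m R : Type*) [Fintype ι] [DecidableEq ι] [Fintype m] [DecidableEq m] [CommSemiring R]

/-- Unlike `Matrix.blockDiagonal`, the block index is the first factor, as qubit `j` is in
`IsPauliProd`. -/
def blockDiagonalFst : (ι → Matrix m m R) →+* Matrix (ι × m) (ι × m) R :=
  (compAlgEquiv ι m R R).toRingHom.comp (diagonalRingHom ι (Matrix m m R))

variable {ι m R}

theorem blockDiagonalFst_apply (d : ι → Matrix m m R) (b c : ι) (v w : m) :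
    blockDiagonalFst ι m R d (b, v) (c, w) = if b = c then d b v w else 0 := by
  by_cases hbc : b = c
  · subst hbc; simp [blockDiagonalFst]
  · simp [blockDiagonalFst, hbc]

theorem blockDiagonalFst_injective : Function.Injective (blockDiagonalFst ι m R) :=
  (compAlgEquiv ι m R R).injective.comp diagonal_injective

theorem exists_eq_blockDiagonalFst {A : Matrix (ι × m) (ι × m) R} {D : Matrix ι ι R}
    (hD : D.IsDiag) {H : Matrix m m R} (hA : ∀ b c v w, A (b, v) (c, w) = D b c * H v w) :
    ∃ d, A = blockDiagonalFst ι m R d := by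
  refine ⟨fun b => D b b • H, ?_⟩
  ext ⟨b, v⟩ ⟨c, w⟩
  rw [hA, blockDiagonalFst_apply]
  split_ifs with hbc
  · subst hbc; rfl
  · rw [hD hbc, zero_mul]

theorem eq_compAlgEquiv_antidiagonal {A : Matrix (Fin 2 × m) (Fin 2 × m) R} {H : Matrix m m R}
    (hA : ∀ b c v w, A (b, v) (c, w) = !![0, 1; 1, 0] b c * H v w) :
    A = compAlgEquiv (Fin 2) m R R !![0, H; H, 0] := by
  ext ⟨b, v⟩ ⟨c, w⟩
  fin_cases b <;> fin_cases c <;> simp [hA]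

end BlockDiagonalFst

theorem eq_of_commute_antidiagonal {R : Type*} [Semiring R] {x : R} (hx : IsUnit x)
    {d e : Fin 2 → R} (hd : Commute (diagonal d) !![0, x; x, 0])
    (he : Commute (diagonal e) !![0, x; x, 0]) {a : Fin 2} (hde : d a = e a) : d = e := by
  have entry (d : Fin 2 → R) (hd : Commute (diagonal d) !![0, x; x, 0]) :
      d 0 * x = x * d 1 ∧ d 1 * x = x * d 0 := by
    have h01 := congrFun (congrFun hd.eq 0) 1
    have h10 := congrFun (congrFun hd.eq 1) 0
    simp only [diagonal_mul, mul_diagonal] at h01 h10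
    exact ⟨by simpa using h01, by simpa using h10⟩
  obtain ⟨hd01, hd10⟩ := entry d hd
  obtain ⟨he01, he10⟩ := entry e he
  funext b
  fin_cases a <;> fin_cases b
  · exact hde
  · exact hx.mul_left_cancel (hd01.symm.trans ((congrArg (· * x) hde).trans he01))
  · exact hx.mul_left_cancel (hd10.symm.trans ((congrArg (· * x) hde).trans he10))
  · exact hde

theorem injOn_eval_comap_centralizer_antidiagonal {m R : Type*} [Fintype m] [DecidableEq m]
    [CommSemiring R] {x : Matrix m m R} (hx : IsUnit x) (a : Fin 2) :
    Set.InjOn (Pi.evalMonoidHom (fun _ : Fin 2 => Matrix m m R) a)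
      ((Submonoid.centralizer {compAlgEquiv (Fin 2) m R R !![0, x; x, 0]}).comap
        (blockDiagonalFst (Fin 2) m R)) := by
  have commute_of_mem {d} (hd : d ∈ (Submonoid.centralizer
      {compAlgEquiv (Fin 2) m R R !![0, x; x, 0]}).comap (blockDiagonalFst (Fin 2) m R)) :
      Commute (diagonal d) !![0, x; x, 0] :=
    (commute_map_iff (compAlgEquiv (Fin 2) m R R).injective).mp
      (Submonoid.mem_centralizer_iff.mp hd _ rfl).symm
  intro d hd e he hde
  exact eq_of_commute_antidiagonal hx (commute_of_mem hd) (commute_of_mem he) hde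

end Matrix

def IsIndependent {ι M : Type*} [MulOneClass M] (x : ι → M) : Prop :=
  ∀ i, x i ∉ Submonoid.closure (Set.range fun j : {j : ι // j ≠ i} => x j)

namespace IsIndependent

variable {ι κ M N F : Type*} [MulOneClass M] [MulOneClass N] [FunLike F M N]
  [MonoidHomClass F M N] {x : ι → M}

theorem comp_injective (hx : IsIndependent x) {e : κ → ι} (he : Function.Injective e) :
    IsIndependent (x ∘ e) := by
  intro i hi
  refine hx (e i) (Submonoid.closure_mono ?_ hi)
  rintro _ ⟨⟨j, hj⟩, rfl⟩
  exact ⟨⟨e j, he.ne hj⟩, rfl⟩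

theorem of_comp (φ : F) (h : IsIndependent (φ ∘ x)) : IsIndependent x := by
  intro i hi
  have := Submonoid.mem_map_of_mem φ hi
  rw [MonoidHom.map_mclosure, ← Set.range_comp] at this
  exact h i this

theorem comp_of_injOn (hx : IsIndependent x) (φ : F) {K : Submonoid M} (hφ : Set.InjOn φ K)
    (hxK : ∀ i, x i ∈ K) : IsIndependent (φ ∘ x) := by
  intro i hi
  obtain ⟨y, hy, hyx⟩ :
      φ (x i) ∈ (Submonoid.closure (Set.range fun j : {j : ι // j ≠ i} => x j)).map φ := by
    rw [MonoidHom.map_mclosure, ← Set.range_comp]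
    exact hi
  have hyK : y ∈ K := by
    refine Submonoid.closure_le.mpr ?_ hy
    rintro _ ⟨j, rfl⟩
    exact hxK j
  rw [hφ hyK (hxK i) hyx] at hy
  exact hx i hy

end IsIndependent

theorem isIndependent_apply_of_commute_antidiagonal {ι m R : Type*} [Fintype m] [DecidableEq m]
    [CommSemiring R] {x : Matrix m m R} (hx : IsUnit x) {F : ι → Fin 2 → Matrix m m R}
    (hF : IsIndependent (blockDiagonalFst (Fin 2) m R ∘ F))
    (hFx : ∀ i, Commute (blockDiagonalFst (Fin 2) m R (F i))
      (compAlgEquiv (Fin 2) m R R !![0, x; x, 0]))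
    (a : Fin 2) : IsIndependent fun i => F i a := by
  have hFK (i) : F i ∈ (Submonoid.centralizer {compAlgEquiv (Fin 2) m R R !![0, x; x, 0]}).comap
      (blockDiagonalFst (Fin 2) m R) := by
    rw [Submonoid.mem_comap, Submonoid.mem_centralizer_iff]
    rintro _ rfl
    exact (hFx i).eq.symm
  exact (hF.of_comp _).comp_of_injOn (Pi.evalMonoidHom _ a)
    (injOn_eval_comap_centralizer_antidiagonal hx a) hFK

def pauliPhases : Set ℂ := {1, -1, Complex.I, -Complex.I}

def singleQubitPaulis : Set (Matrix (Fin 2) (Fin 2) ℂ) := {1, pauliX, pauliY, pauliZ}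

theorem ne_zero_of_mem_pauliPhases {ω : ℂ} (hω : ω ∈ pauliPhases) : ω ≠ 0 := by
  rcases hω with rfl | rfl | rfl | rfl <;> simp

theorem mul_mem_pauliPhases {ω s : ℂ} (hω : ω ∈ pauliPhases) (hs : s = 1 ∨ s = -1) :
    ω * s ∈ pauliPhases := by
  rcases hs with rfl | rfl <;> rcases hω with rfl | rfl | rfl | rfl <;> simp [pauliPhases]

theorem isDiag_pauliZ : pauliZ.IsDiag := by
  intro i j hij
  fin_cases i <;> fin_cases j <;> simp_all [pauliZ]

theorem mul_self_of_mem_singleQubitPaulis {S : Matrix (Fin 2) (Fin 2) ℂ}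
    (hS : S ∈ singleQubitPaulis) : S * S = 1 := by
  rcases hS with rfl | rfl | rfl | rfl <;> ext i j <;> fin_cases i <;> fin_cases j <;>
    simp [mul_apply, pauliX, pauliY, pauliZ]

theorem apply_self_eq_one_or_neg_one {S : Matrix (Fin 2) (Fin 2) ℂ}
    (hS : S ∈ singleQubitPaulis) (hS01 : S 0 1 = 0) (a : Fin 2) : S a a = 1 ∨ S a a = -1 := by
  rcases hS with rfl | rfl | rfl | rfl <;> fin_cases a <;> simp_all [pauliX, pauliY, pauliZ]

theorem piKronecker_mul_self {n : ℕ} {P : Fin n → Matrix (Fin 2) (Fin 2) ℂ}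
    (hP : ∀ j, P j ∈ singleQubitPaulis) : piKronecker P * piKronecker P = 1 := by
  have hPP : P * P = 1 := funext fun j => mul_self_of_mem_singleQubitPaulis (hP j)
  rw [piKronecker_mul, hPP, piKronecker_one]

namespace IsPauliProd

variable {n : ℕ}

theorem exists_mul_self_eq_smul_one
    {A : Matrix (Fin 2 × (Fin n → Fin 2)) (Fin 2 × (Fin n → Fin 2)) ℂ}
    (hA : IsPauliProd A) : ∃ c : ℂ, c ≠ 0 ∧ A * A = c • 1 := by
  obtain ⟨ω, Q, P, hω, hQ, hP, hA⟩ := hA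
  have hA : A = ω • (Q ⊗ₖ piKronecker P) := by
    ext p q; simp [hA, piKronecker, mul_assoc]
  have hω0 := ne_zero_of_mem_pauliPhases hω
  refine ⟨ω * ω, mul_ne_zero hω0 hω0, ?_⟩
  rw [hA, smul_mul_smul_comm, ← mul_kronecker_mul, mul_self_of_mem_singleQubitPaulis hQ,
    piKronecker_mul_self hP, one_kronecker_one]

theorem isUnit_of_eq_compAlgEquiv_antidiagonal {x : Matrix (Fin n → Fin 2) (Fin n → Fin 2) ℂ}
    (hx : IsPauliProd (compAlgEquiv (Fin 2) (Fin n → Fin 2) ℂ ℂ !![0, x; x, 0])) :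
    IsUnit x := by
  obtain ⟨c, hc, hsq⟩ := hx.exists_mul_self_eq_smul_one
  rw [← map_mul, ← map_one (compAlgEquiv _ _ _ ℂ), ← map_smul,
    (compAlgEquiv _ _ _ ℂ).injective.eq_iff] at hsq
  have hx2 : x * x = c • 1 := by simpa [mul_apply] using congrFun (congrFun hsq 0) 0
  exact IsUnit.of_mul_eq_one (c⁻¹ • x)
    (by rw [mul_smul_comm, hx2, smul_smul, inv_mul_cancel₀ hc, one_smul])

theorem isPauli_block {d : Fin 2 → Matrix (Fin n → Fin 2) (Fin n → Fin 2) ℂ}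
    (hd : IsPauliProd (blockDiagonalFst (Fin 2) (Fin n → Fin 2) ℂ d)) (a : Fin 2) :
    IsPauli (d a) := by
  obtain ⟨ω, Q, P, hω, hQ, hP, hd⟩ := hd
  have hQ01 : Q 0 1 = 0 := by
    obtain ⟨v, w, hvw⟩ : ∃ v w, piKronecker P v w ≠ 0 := by
      by_contra! h
      have hPP := piKronecker_mul_self hP
      simp [show piKronecker P = 0 from Matrix.ext h] at hPP
    have h01 := hd (0, v) (1, w)
    rw [blockDiagonalFst_apply, if_neg zero_ne_one, eq_comm] at h01
    simp only [piKronecker, of_apply] at hvw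
    simpa [ne_zero_of_mem_pauliPhases hω, hvw] using h01
  refine ⟨ω * Q a a, P, mul_mem_pauliPhases hω (apply_self_eq_one_or_neg_one hQ hQ01 a), hP,
    fun v w => ?_⟩
  simpa [blockDiagonalFst_apply] using hd (a, v) (a, w)

end IsPauliProd

theorem contracted_stabilizers_independent_general {n k : ℕ}
    (gz gx : Matrix (Fin 2 × (Fin n → Fin 2)) (Fin 2 × (Fin n → Fin 2)) ℂ)
    (g : Fin k → Matrix (Fin 2 × (Fin n → Fin 2)) (Fin 2 × (Fin n → Fin 2)) ℂ)
    (a : Fin 2)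
    (f : Fin (k + 2) → Matrix (Fin 2 × (Fin n → Fin 2)) (Fin 2 × (Fin n → Fin 2)) ℂ)
    (hf : f = Fin.cons gz (Fin.cons gx g))
    (hPauli : ∀ i, IsPauliProd (f i))
    (hcomm : ∀ i j, f i * f j = f j * f i)
    (hind : ∀ i, f i ∉
      Submonoid.closure (Set.range fun j : {j : Fin (k + 2) // j ≠ i} => f j.val))
    (hz : ∃ h' : Matrix (Fin n → Fin 2) (Fin n → Fin 2) ℂ, ∀ b c v w, gz (b, v) (c, w) = pauliZ b c * h' v w)
    (hx : ∃ h' : Matrix (Fin n → Fin 2) (Fin n → Fin 2) ℂ, ∀ b c v w, gx (b, v) (c, w) = pauliX b c * h' v w)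
    (hgI : ∀ i, ∃ h' : Matrix (Fin n → Fin 2) (Fin n → Fin 2) ℂ, ∀ b c v w,
      g i (b, v) (c, w) = (if b = c then (1 : ℂ) else 0) * h' v w)
    (ctr : Matrix (Fin 2 × (Fin n → Fin 2)) (Fin 2 × (Fin n → Fin 2)) ℂ →
      Matrix (Fin n → Fin 2) (Fin n → Fin 2) ℂ)
    (hctr : ∀ A v w, ctr A v w = A (a, v) (a, w))
    (h : Fin (k + 1) → Matrix (Fin n → Fin 2) (Fin n → Fin 2) ℂ)
    (hh : h = Fin.cons (ctr gz) (fun i => ctr (g i))) :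
    (∀ i, IsPauli (h i)) ∧ (∀ i j, h i * h j = h j * h i) ∧
      (∀ i, h i ∉
        Submonoid.closure (Set.range fun j : {j : Fin (k + 1) // j ≠ i} => h j.val)) := by
  obtain ⟨Hz, hz⟩ := hz
  obtain ⟨Hx, hx⟩ := hx
  choose G hG using hgI
  obtain ⟨dz, hdz⟩ := exists_eq_blockDiagonalFst isDiag_pauliZ hz
  choose dg hdg using fun i => exists_eq_blockDiagonalFst (D := 1) isDiag_one (hG i)
  set F : Fin (k + 1) → Fin 2 → Matrix (Fin n → Fin 2) (Fin n → Fin 2) ℂ := Fin.cons dz dg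
  have hfF (i) : f (Fin.succAbove 1 i) = blockDiagonalFst _ _ _ (F i) := by
    induction i using Fin.cases <;> simp [hf, hdz, hdg, F]
  have hgx : f 1 = compAlgEquiv _ _ _ ℂ !![0, Hx; Hx, 0] := by
    simpa [hf] using eq_compAlgEquiv_antidiagonal hx
  have hhF : h = fun i => F i a := by
    funext i
    have hhf : h i = ctr (f (Fin.succAbove 1 i)) := by
      induction i using Fin.cases <;> simp [hh, hf]
    ext v w
    rw [hhf, hctr, hfF, blockDiagonalFst_apply, if_pos rfl]
  have hFcomm : ∀ i j, Commute (blockDiagonalFst _ _ _ (F i)) (f j) := fun i j => by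
    rw [← hfF]; exact hcomm _ _
  have hFind : IsIndependent (blockDiagonalFst _ _ _ ∘ F) := by
    rw [show blockDiagonalFst _ _ _ ∘ F = f ∘ Fin.succAbove 1 from (funext hfF).symm]
    exact IsIndependent.comp_injective hind (Fin.succAbove_right_injective (p := 1))
  rw [hhF]
  refine ⟨fun i => (hfF i ▸ hPauli _).isPauli_block a, fun i j => ?_, ?_⟩
  · have hFF : F i * F j = F j * F i :=
      blockDiagonalFst_injective (by rw [map_mul, map_mul, ← hfF j]; exact (hFcomm i _).eq)
    exact congrFun hFF a
  · have hHx : IsUnit Hx := (hgx ▸ hPauli 1).isUnit_of_eq_compAlgEquiv_antidiagonal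
    exact isIndependent_apply_of_commute_antidiagonal hHx hFind (fun i => hgx ▸ hFcomm i 1) a

/-- Let G = {g_z, g_x, g₁, …, g_k} be a commuting independent set of
Pauli operators on n+1 ≥ 2 qubits in ZX(j)-form: g_z acts as Z on the distinguished
qubit j, g_x acts as X on qubit j, and each g_i acts as identity on qubit j. For fixed
a ∈ {0,1}, with g̃ = ⟨a| g |a⟩ denoting contraction of qubit j, the set
{g̃_z, g̃₁, …, g̃_k} is a commuting independent set of Pauli operators on n qubits. -/
theorem contracted_stabilizers_independent {n k : ℕ} (hn : 1 ≤ n)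
    (gz gx : Matrix (Fin 2 × (Fin n → Fin 2)) (Fin 2 × (Fin n → Fin 2)) ℂ)
    (g : Fin k → Matrix (Fin 2 × (Fin n → Fin 2)) (Fin 2 × (Fin n → Fin 2)) ℂ)
    (a : Fin 2)
    (f : Fin (k + 2) → Matrix (Fin 2 × (Fin n → Fin 2)) (Fin 2 × (Fin n → Fin 2)) ℂ)
    (hf : f = Fin.cons gz (Fin.cons gx g))
    (hPauli : ∀ i, IsPauliProd (f i))
    (hcomm : ∀ i j, f i * f j = f j * f i)
    (hind : ∀ i, f i ∉
      Submonoid.closure (Set.range fun j : {j : Fin (k + 2) // j ≠ i} => f j.val))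
    (hz : ∃ h' : Matrix (Fin n → Fin 2) (Fin n → Fin 2) ℂ, ∀ b c v w, gz (b, v) (c, w) = pauliZ b c * h' v w)
    (hx : ∃ h' : Matrix (Fin n → Fin 2) (Fin n → Fin 2) ℂ, ∀ b c v w, gx (b, v) (c, w) = pauliX b c * h' v w)
    (hgI : ∀ i, ∃ h' : Matrix (Fin n → Fin 2) (Fin n → Fin 2) ℂ, ∀ b c v w,
      g i (b, v) (c, w) = (if b = c then (1 : ℂ) else 0) * h' v w)
    (ctr : Matrix (Fin 2 × (Fin n → Fin 2)) (Fin 2 × (Fin n → Fin 2)) ℂ →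
      Matrix (Fin n → Fin 2) (Fin n → Fin 2) ℂ)
    (hctr : ∀ A v w, ctr A v w = A (a, v) (a, w))
    (h : Fin (k + 1) → Matrix (Fin n → Fin 2) (Fin n → Fin 2) ℂ)
    (hh : h = Fin.cons (ctr gz) (fun i => ctr (g i))) :
    (∀ i, IsPauli (h i)) ∧ (∀ i j, h i * h j = h j * h i) ∧
      (∀ i, h i ∉
        Submonoid.closure (Set.range fun j : {j : Fin (k + 1) // j ≠ i} => h j.val)) :=
  contracted_stabilizers_independent_general gz gx g a f hf hPauli hcomm hind hz hx hgI ctr hctr h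
    hh
end

section
/- If the stabilizer extent is multiplicative on tensor products of single-qubit states, then for the product magic state |T_φ†⟩ = ⊗_{j=1}^{t} (|0⟩ + e^{-iφ_j}|1⟩)/√2 one has ξ(|T_φ†⟩) = ∏_{j=1}^{t} (√(1 - sin φ_j) + √(1 - cos φ_j))², and in particular ξ(|T_φ†⟩) ≤ ((√(1-1/√2)·2)²)^t, i.e., the extent grows at most like c^t with c = 4(1 - 1/√2) ≈ 1.17. -/
lemma key_ineq (θ : ℝ) (h0 : 0 ≤ θ) (h1 : θ ≤ Real.pi / 2) :
    (Real.sqrt (1 - Real.sin θ) + Real.sqrt (1 - Real.cos θ)) ^ 2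
      ≤ 4 * (1 - 1 / Real.sqrt 2) := by
  have hpi : θ ≤ Real.pi := le_trans h1 (by linarith [Real.pi_pos])
  set s := Real.sin θ with hsdef
  set c := Real.cos θ with hcdef
  have hs0 : 0 ≤ s := Real.sin_nonneg_of_nonneg_of_le_pi h0 hpi
  have hc0 : 0 ≤ c := Real.cos_nonneg_of_mem_Icc ⟨by linarith, h1⟩
  have hs1 : s ≤ 1 := Real.sin_le_one θ
  have hc1 : c ≤ 1 := Real.cos_le_one θ
  have hsc : s ^ 2 + c ^ 2 = 1 := Real.sin_sq_add_cos_sq θ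
  set r := Real.sqrt 2 with hrdef
  have hr : r ^ 2 = 2 := Real.sq_sqrt (by norm_num)
  have hr0 : 0 < r := Real.sqrt_pos.mpr (by norm_num)
  have hr1 : 1 ≤ r := by nlinarith
  have hu1 : 1 ≤ s + c := by nlinarith [mul_nonneg hs0 hc0]
  have hur : s + c ≤ r := by nlinarith [sq_nonneg (s - c)]
  set a := Real.sqrt (1 - s) with hadef
  set b := Real.sqrt (1 - c) with hbdef
  have ha : a ^ 2 = 1 - s := Real.sq_sqrt (by linarith)
  have hb : b ^ 2 = 1 - c := Real.sq_sqrt (by linarith)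
  have ha0 : 0 ≤ a := Real.sqrt_nonneg _
  have hb0 : 0 ≤ b := Real.sqrt_nonneg _
  have hab : 2 * (a * b) = r * (s + c - 1) := by
    have hx2 : (2 * (a * b)) ^ 2 = (r * (s + c - 1)) ^ 2 := by
      have h1 : (2 * (a * b)) ^ 2 = 4 * ((1 - s) * (1 - c)) := by
        rw [← ha, ← hb]; ring
      have h2 : (r * (s + c - 1)) ^ 2 = 2 * (s + c - 1) ^ 2 := by
        rw [mul_pow, hr]
      rw [h1, h2]; linear_combination (-2 : ℝ) * hsc
    have hx0 : 0 ≤ 2 * (a * b) := by positivity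
    have hy0 : 0 ≤ r * (s + c - 1) := mul_nonneg (le_of_lt hr0) (by linarith)
    have h := congrArg Real.sqrt hx2
    rwa [Real.sqrt_sq hx0, Real.sqrt_sq hy0] at h
  have h4 : 4 * (1 - 1 / r) = 4 - 2 * r := by
    have hinv : 1 / r = r / 2 := by
      rw [eq_div_iff (by norm_num : (2:ℝ) ≠ 0), one_div,
        inv_mul_eq_div, div_eq_iff (ne_of_gt hr0)]
      linear_combination -hr
    rw [hinv]; ring
  rw [h4]
  have hkey : (r - 1) * (r - (s + c)) ≥ 0 :=
    mul_nonneg (by linarith) (by linarith)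
  nlinarith [hab, ha, hb, hkey]

/-- If the stabilizer extent is multiplicative on tensor products of
single-qubit states, then for |T_φ†⟩ = ⊗_j (|0⟩+e^{-iφ_j}|1⟩)/√2 one has
ξ(|T_φ†⟩) = ∏_j (√(1-sin φ_j) + √(1-cos φ_j))², and in particular
ξ(|T_φ†⟩) ≤ (4(1-1/√2))^t ≈ 1.17^t. Here `xiSingle θ` denotes the stabilizer extent
of the single-qubit state (|0⟩+e^{-iθ}|1⟩)/√2 (whose known closed form on [0, π/2]
is assumed), and `Xi` denotes the stabilizer extent of the product state, with
multiplicativity assumed as a hypothesis. -/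
theorem extent_product_formula_and_bound (t : ℕ) (φ : Fin t → ℝ)
    (hφ : ∀ j, φ j ∈ Set.Icc 0 (Real.pi / 2))
    (xiSingle : ℝ → ℝ) (Xi : ℝ)
    (hsingle : ∀ θ ∈ Set.Icc 0 (Real.pi / 2),
      xiSingle θ = (Real.sqrt (1 - Real.sin θ) + Real.sqrt (1 - Real.cos θ)) ^ 2)
    (hmult : Xi = ∏ j, xiSingle (φ j)) :
    Xi = (∏ j, (Real.sqrt (1 - Real.sin (φ j)) + Real.sqrt (1 - Real.cos (φ j))) ^ 2) ∧
      Xi ≤ (4 * (1 - 1 / Real.sqrt 2)) ^ t := by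
  have heq : Xi = ∏ j, (Real.sqrt (1 - Real.sin (φ j)) + Real.sqrt (1 - Real.cos (φ j))) ^ 2 := by
    rw [hmult]
    exact Finset.prod_congr rfl fun j _ => hsingle _ (hφ j)
  refine ⟨heq, ?_⟩
  rw [heq]
  calc (∏ j, (Real.sqrt (1 - Real.sin (φ j)) + Real.sqrt (1 - Real.cos (φ j))) ^ 2)
      ≤ ∏ _j : Fin t, (4 * (1 - 1 / Real.sqrt 2)) := by
        apply Finset.prod_le_prod
        · intro j _; positivity
        · intro j _; exact key_ineq (φ j) (hφ j).1 (hφ j).2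
    _ = (4 * (1 - 1 / Real.sqrt 2)) ^ t := by
        rw [Finset.prod_const, Finset.card_fin]
end
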